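/- (SCM for optimization via generalized row sums) Let x_1,...,x_n be the generalized row sums for an array of paired comparisons, with ε positive and reasonable. Then for sufficiently small α > 0, every weak order ρ maximizing ∑_{i=1}^n (x_i·ρ(i) − α·ρ(i)²) over all weak orders satisfies: x_i > x_j implies ρ(i) > ρ(j), and x_i = x_j implies ρ(i) = ρ(j). Hence the maximizer orders the alternatives exactly as the generalized row sums. -/

import Mathlib

open scoped Classical

/-- The Copeland index of alternative `i` in a binary relation `r` on `Fin n`. -/
noncomputable def copeland {n : ℕ} (r : Fin n → Fin n → Prop) (i : Fin n) : ℤ :=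
  (({j | r i j} : Set (Fin n)).ncard : ℤ) - (({j | r j i} : Set (Fin n)).ncard : ℤ)

/-- A weak order: a complete and transitive binary relation. -/
def IsWeakOrder {n : ℕ} (r : Fin n → Fin n → Prop) : Prop :=
  (∀ i j, r i j ∨ r j i) ∧ Transitive r

/-- An array of `m` incomplete paired comparison `n × n` matrices with entries in
`[rmin, rmax]`. -/
structure Profile (rmin rmax : ℝ) (n m : ℕ) where
  defined : Fin m → Fin n → Fin n → Prop
  val : Fin m → Fin n → Fin n → ℝ
  defined_symm : ∀ p i j, defined p i j → defined p j i
  defined_irrefl : ∀ p i, ¬ defined p i i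
  val_mem : ∀ p i j, defined p i j → rmin ≤ val p i j ∧ val p i j ≤ rmax

section Aux
variable {n : ℕ} {r : Fin n → Fin n → Prop}

lemma copeland_eq_filter (r : Fin n → Fin n → Prop) (i : Fin n) :
    copeland r i = ((Finset.univ.filter fun j => r i j).card : ℤ)
      - ((Finset.univ.filter fun j => r j i).card : ℤ) := by
  unfold copeland
  rw [Set.ncard_eq_toFinset_card', Set.ncard_eq_toFinset_card']
  simp [Set.toFinset_setOf]

lemma wo_refl (h : IsWeakOrder r) (a : Fin n) : r a a := (h.1 a a).elim id id

lemma tie_eq (h : IsWeakOrder r) {a b : Fin n} (hab : r a b) (hba : r b a) :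
    copeland r a = copeland r b := by
  rw [copeland_eq_filter, copeland_eq_filter]
  have h1 : (Finset.univ.filter fun j => r a j) = (Finset.univ.filter fun j => r b j) := by
    ext k; simp only [Finset.mem_filter, Finset.mem_univ, true_and]
    exact ⟨fun hk => h.2 hba hk, fun hk => h.2 hab hk⟩
  have h2 : (Finset.univ.filter fun j => r j a) = (Finset.univ.filter fun j => r j b) := by
    ext k; simp only [Finset.mem_filter, Finset.mem_univ, true_and]
    exact ⟨fun hk => h.2 hk hab, fun hk => h.2 hk hba⟩
  rw [h1, h2]

lemma strict_lt (h : IsWeakOrder r) {a b : Fin n} (hab : r a b) (hba : ¬ r b a) :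
    copeland r b < copeland r a := by
  rw [copeland_eq_filter, copeland_eq_filter]
  have h1 : (Finset.univ.filter fun j => r b j) ⊂ (Finset.univ.filter fun j => r a j) := by
    constructor
    · intro k hk
      simp only [Finset.mem_filter, Finset.mem_univ, true_and] at hk ⊢
      exact h.2 hab hk
    · intro hsub
      have := hsub (by simp [wo_refl h a] : a ∈ Finset.univ.filter fun j => r a j)
      simp only [Finset.mem_filter, Finset.mem_univ, true_and] at this
      exact hba this
  have h2 : (Finset.univ.filter fun j => r j a) ⊂ (Finset.univ.filter fun j => r j b) := by
    constructor
    · intro k hk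
      simp only [Finset.mem_filter, Finset.mem_univ, true_and] at hk ⊢
      exact h.2 hk hab
    · intro hsub
      have := hsub (by simp [wo_refl h b] : b ∈ Finset.univ.filter fun j => r j b)
      simp only [Finset.mem_filter, Finset.mem_univ, true_and] at this
      exact hba this
  have c1 := Finset.card_lt_card h1
  have c2 := Finset.card_lt_card h2
  omega

lemma rep (h : IsWeakOrder r) {a b : Fin n} : r a b ↔ copeland r b ≤ copeland r a := by
  constructor
  · intro hab
    rcases (h.1 b a) with hba | _
    · exact (tie_eq h hab hba).ge
    · by_cases hba : r b a
      · exact (tie_eq h hab hba).ge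
      · exact (strict_lt h hab hba).le
  · intro hle
    by_contra hab
    rcases h.1 a b with h1 | h2
    · exact hab h1
    · exact absurd hle (not_le.mpr (strict_lt h h2 hab))

lemma sum_copeland_zero (r : Fin n → Fin n → Prop) : ∑ k, copeland r k = 0 := by
  have key : ∑ k, ((Finset.univ.filter fun j => r k j).card)
      = ∑ k, ((Finset.univ.filter fun j => r j k).card) := by
    simp only [Finset.card_filter]
    rw [Finset.sum_comm]
  simp only [copeland_eq_filter, Finset.sum_sub_distrib]
  rw [← Nat.cast_sum, ← Nat.cast_sum, key]
  ring

noncomputable def obj (x : Fin n → ℝ) (α : ℝ) (r : Fin n → Fin n → Prop) : ℝ :=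
  ∑ i, (x i * (copeland r i : ℝ) - α * (copeland r i : ℝ) ^ 2)

lemma copeland_comp (r : Fin n → Fin n → Prop) (σ : Equiv.Perm (Fin n)) (k : Fin n) :
    copeland (fun a b => r (σ a) (σ b)) k = copeland r (σ k) := by
  unfold copeland
  have h1 : ({j | r (σ k) (σ j)} : Set (Fin n)) = σ.symm '' {j | r (σ k) j} := by
    ext j
    constructor
    · intro hj; exact ⟨σ j, hj, by simp⟩
    · rintro ⟨y, hy, rfl⟩; simpa using hy
  have h2 : ({j | r (σ j) (σ k)} : Set (Fin n)) = σ.symm '' {j | r j (σ k)} := by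
    ext j
    constructor
    · intro hj; exact ⟨σ j, hj, by simp⟩
    · rintro ⟨y, hy, rfl⟩; simpa using hy
  rw [h1, h2, Set.ncard_image_of_injective _ σ.symm.injective,
    Set.ncard_image_of_injective _ σ.symm.injective]

lemma mono_of_max {x : Fin n → ℝ} {α : ℝ} (h : IsWeakOrder r)
    (hmax : ∀ s : Fin n → Fin n → Prop, IsWeakOrder s → obj x α s ≤ obj x α r)
    {i j : Fin n} (hij : x j < x i) : copeland r j ≤ copeland r i := by
  by_cases hne : i = j
  · exact (hne ▸ le_refl _)
  set σ := Equiv.swap i j with hσ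
  set s : Fin n → Fin n → Prop := fun a b => r (σ a) (σ b) with hs
  have hws : IsWeakOrder s := ⟨fun a b => h.1 _ _, fun a b c hab hbc => h.2 hab hbc⟩
  have hms := hmax s hws
  unfold obj at hms
  simp only [hs, copeland_comp] at hms
  -- subtract the α parts
  have hsq : ∑ k, (α * (copeland r (σ k) : ℝ) ^ 2) = ∑ k, (α * (copeland r k : ℝ) ^ 2) :=
    Equiv.sum_comp σ (fun k => α * (copeland r k : ℝ) ^ 2)
  have hlin : ∑ k, x k * (copeland r (σ k) : ℝ) ≤ ∑ k, x k * (copeland r k : ℝ) := by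
    have e1 : ∑ k, (x k * (copeland r (σ k) : ℝ) - α * (copeland r (σ k) : ℝ) ^ 2)
        = ∑ k, x k * (copeland r (σ k) : ℝ) - ∑ k, (α * (copeland r (σ k) : ℝ) ^ 2) := by
      rw [Finset.sum_sub_distrib]
    have e2 : ∑ k, (x k * (copeland r k : ℝ) - α * (copeland r k : ℝ) ^ 2)
        = ∑ k, x k * (copeland r k : ℝ) - ∑ k, (α * (copeland r k : ℝ) ^ 2) := by
      rw [Finset.sum_sub_distrib]
    rw [e1, e2, hsq] at hms
    linarith
  -- the difference is supported on {i, j}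
  have hdiff : (0:ℝ) ≤ ∑ k, (x k * (copeland r k : ℝ) - x k * (copeland r (σ k) : ℝ)) := by
    rw [Finset.sum_sub_distrib]; linarith
  have hsup : ∑ k, (x k * (copeland r k : ℝ) - x k * (copeland r (σ k) : ℝ))
      = ∑ k ∈ ({i, j} : Finset (Fin n)), (x k * (copeland r k : ℝ) - x k * (copeland r (σ k) : ℝ)) := by
    symm
    apply Finset.sum_subset (Finset.subset_univ _)
    intro k _ hk
    simp only [Finset.mem_insert, Finset.mem_singleton, not_or] at hk
    rw [hσ, Equiv.swap_apply_of_ne_of_ne hk.1 hk.2]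
    ring
  rw [hsup, Finset.sum_pair hne] at hdiff
  rw [hσ] at hdiff
  simp only [Equiv.swap_apply_left, Equiv.swap_apply_right] at hdiff
  by_contra hlt
  push_neg at hlt
  have : (copeland r i : ℝ) < (copeland r j : ℝ) := by exact_mod_cast hlt
  nlinarith

lemma setOf_ncard_congr {P Q : Fin n → Prop} (h : ∀ k, P k ↔ Q k) :
    ({k | P k} : Set (Fin n)).ncard = ({k | Q k} : Set (Fin n)).ncard := by
  congr 1; ext k; exact h k

lemma no_mixed_tie {x : Fin n → ℝ} {α : ℝ} (h : IsWeakOrder r)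
    (hmax : ∀ s : Fin n → Fin n → Prop, IsWeakOrder s → obj x α s ≤ obj x α r)
    (hα : 0 < α) {i j : Fin n}
    (hsmall : α * ((n:ℝ)^2 + n) < x i - x j)
    (hji : x j < x i) (hij : r i j) (hji' : r j i) : False := by
  classical
  set C : Finset (Fin n) := Finset.univ.filter (fun k => r i k ∧ r k i) with hC
  have hiC : i ∈ C := by simp [hC, wo_refl h i]
  have hjC : j ∈ C := by simp [hC, hij, hji']
  obtain ⟨p, hpC, hpmax⟩ := Finset.exists_max_image C x ⟨i, hiC⟩
  have hpC' : r i p ∧ r p i := by simpa [hC] using hpC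
  have hmem : ∀ k, k ∈ C ↔ (r p k ∧ r k p) := by
    intro k
    simp only [hC, Finset.mem_filter, Finset.mem_univ, true_and]
    exact ⟨fun hk => ⟨h.2 hpC'.2 hk.1, h.2 hk.2 hpC'.1⟩,
      fun hk => ⟨h.2 hpC'.1 hk.1, h.2 hk.2 hpC'.2⟩⟩
  have hxp : x i ≤ x p := hpmax i hiC
  have hjp : j ≠ p := fun e => absurd (e ▸ hji) (not_lt.mpr (e ▸ hxp))
  -- the split order
  set s : Fin n → Fin n → Prop :=
    fun a b => if b = p then (a = p ∨ (r a p ∧ ¬ r p a)) else r a b with hs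
  have sp1 : ∀ a, s a p ↔ (a = p ∨ (r a p ∧ ¬ r p a)) := fun a => by simp [hs]
  have sp2 : ∀ a b, b ≠ p → (s a b ↔ r a b) := fun a b hb => by simp [hs, hb]
  have hws : IsWeakOrder s := by
    constructor
    · intro a b
      by_cases hb : b = p
      · by_cases ha : a = p
        · left; rw [hb, sp1]; exact Or.inl ha
        · by_cases hpa : r p a
          · right; rw [hb, sp2 p a ha]; exact hpa
          · left; rw [hb, sp1]; exact Or.inr ⟨(h.1 a p).resolve_right hpa, hpa⟩
      · by_cases ha : a = p
        · by_cases hpb : r p b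
          · left; rw [ha, sp2 p b hb]; exact hpb
          · right; rw [ha, sp1]; exact Or.inr ⟨(h.1 b p).resolve_right hpb, hpb⟩
        · rcases h.1 a b with hab | hba
          · left; rw [sp2 a b hb]; exact hab
          · right; rw [sp2 b a ha]; exact hba
    · intro a b c hab hbc
      by_cases hc : c = p
      · rw [hc] at hbc ⊢
        rcases (sp1 b).mp hbc with hbp | ⟨hbp, hnpb⟩
        · rw [hbp] at hab; exact hab
        · have hb' : b ≠ p := fun e => hnpb (e ▸ wo_refl h p)
          have hab' : r a b := (sp2 a b hb').mp hab
          rw [sp1]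
          by_cases hap : a = p
          · exact Or.inl hap
          · exact Or.inr ⟨h.2 hab' hbp, fun hpa => hnpb (h.2 hpa hab')⟩
      · have hbc' : r b c := (sp2 b c hc).mp hbc
        by_cases hbp : b = p
        · rw [hbp] at hab
          rcases (sp1 a).mp hab with hap | ⟨hap, hnpa⟩
          · rw [hap, sp2 p c hc]; rw [hbp] at hbc'; exact hbc'
          · rw [sp2 a c hc]; rw [hbp] at hbc'; exact h.2 hap hbc'
        · have hab' : r a b := (sp2 a b hbp).mp hab
          rw [sp2 a c hc]; exact h.2 hab' hbc'
  -- copeland computations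
  have cP : copeland s p = copeland r p + ((C.erase p).card : ℤ) := by
    have hA : ({k | s p k} : Set (Fin n)).ncard = ({k | r p k} : Set (Fin n)).ncard := by
      apply setOf_ncard_congr
      intro k
      by_cases hk : k = p
      · rw [hk, sp1]; simp [wo_refl h p]
      · rw [sp2 p k hk]
    have hB : ({k | s k p} : Set (Fin n)) = ({k | r k p} : Set (Fin n)) \ ↑(C.erase p) := by
      ext k
      simp only [Set.mem_setOf_eq, Set.mem_diff, Finset.mem_coe, Finset.mem_erase,
        sp1 k, hmem k]
      by_cases hk : k = p
      · simp [hk, wo_refl h p]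
      · simp only [hk, false_or]
        constructor
        · rintro ⟨hkp, hnpk⟩; exact ⟨hkp, fun hh => hnpk hh.2.1⟩
        · rintro ⟨hkp, hnot⟩
          exact ⟨hkp, fun hpk => hnot ⟨hk, hpk, hkp⟩⟩
    have hsub : (↑(C.erase p) : Set (Fin n)) ⊆ {k | r k p} := by
      intro k hk
      simp only [Finset.coe_erase, Set.mem_diff, Finset.mem_coe, Set.mem_singleton_iff] at hk
      exact ((hmem k).mp hk.1).2
    have hle : (↑(C.erase p) : Set (Fin n)).ncard ≤ ({k | r k p} : Set (Fin n)).ncard :=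
      Set.ncard_le_ncard hsub (Set.toFinite _)
    have hle' : (C.erase p).card ≤ ({k | r k p} : Set (Fin n)).ncard := by
      rwa [Set.ncard_coe_finset] at hle
    unfold copeland
    rw [hA, hB, Set.ncard_diff hsub, Set.ncard_coe_finset, Nat.cast_sub hle']
    ring
  have cA : ∀ a ∈ C.erase p, copeland s a = copeland r a - 1 := by
    intro a ha
    have hap : a ≠ p := Finset.ne_of_mem_erase ha
    have haC := (hmem a).mp (Finset.mem_of_mem_erase ha)
    have hB : ({k | s k a} : Set (Fin n)).ncard = ({k | r k a} : Set (Fin n)).ncard :=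
      setOf_ncard_congr (fun k => sp2 k a hap)
    have hA : ({k | s a k} : Set (Fin n)) = ({k | r a k} : Set (Fin n)) \ {p} := by
      ext k
      simp only [Set.mem_setOf_eq, Set.mem_diff, Set.mem_singleton_iff]
      by_cases hk : k = p
      · rw [hk, sp1]; simp [hap, haC.1]
      · rw [sp2 a k hk]; simp [hk]
    have hsub : ({p} : Set (Fin n)) ⊆ {k | r a k} := by
      intro k hk; simp only [Set.mem_singleton_iff] at hk; rw [hk]; exact haC.2
    have hle : ({p} : Set (Fin n)).ncard ≤ ({k | r a k} : Set (Fin n)).ncard :=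
      Set.ncard_le_ncard hsub (Set.toFinite _)
    have hle' : 1 ≤ ({k | r a k} : Set (Fin n)).ncard := by
      rwa [Set.ncard_singleton] at hle
    unfold copeland
    rw [hA, hB, Set.ncard_diff hsub, Set.ncard_singleton, Nat.cast_sub hle']
    push_cast
    ring
  have cC : ∀ a, a ∉ C → copeland s a = copeland r a := by
    intro a ha
    have hap : a ≠ p := fun e => ha (e ▸ hpC)
    have hanot : ¬ (r p a ∧ r a p) := fun hh => ha ((hmem a).mpr hh)
    have hB : ({k | s k a} : Set (Fin n)).ncard = ({k | r k a} : Set (Fin n)).ncard :=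
      setOf_ncard_congr (fun k => sp2 k a hap)
    have hA : ({k | s a k} : Set (Fin n)).ncard = ({k | r a k} : Set (Fin n)).ncard := by
      apply setOf_ncard_congr
      intro k
      by_cases hk : k = p
      · rw [hk, sp1]
        constructor
        · rintro (he | ⟨hap', _⟩)
          · exact absurd he hap
          · exact hap'
        · intro hap'
          exact Or.inr ⟨hap', fun hpa => hanot ⟨hpa, hap'⟩⟩
      · rw [sp2 a k hk]
    unfold copeland
    rw [hA, hB]
  -- objective difference
  have hcti : ∀ a ∈ C, copeland r a = copeland r p := by
    intro a ha
    have := (hmem a).mp ha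
    exact tie_eq h this.2 this.1
  set t : ℝ := ((C.erase p).card : ℝ) with ht
  have key : obj x α s - obj x α r
      = (∑ a ∈ C.erase p, (x p - x a)) - α * (t ^ 2 + t) := by
    unfold obj
    rw [← Finset.sum_sub_distrib]
    rw [← Finset.sum_subset (Finset.subset_univ C) (by
      intro k _ hk
      rw [cC k hk]
      ring)]
    rw [← Finset.add_sum_erase _ _ hpC]
    have hterm : ∀ a ∈ C.erase p,
        (x a * (copeland s a : ℝ) - α * (copeland s a : ℝ) ^ 2)
          - (x a * (copeland r a : ℝ) - α * (copeland r a : ℝ) ^ 2)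
        = α * (2 * (copeland r p : ℝ) - 1) - x a := by
      intro a ha
      rw [cA a ha, hcti a (Finset.mem_of_mem_erase ha)]
      push_cast
      ring
    rw [Finset.sum_congr rfl hterm, cP]
    rw [Finset.sum_sub_distrib, Finset.sum_const, nsmul_eq_mul]
    have hxa : ∑ a ∈ C.erase p, (x p - x a)
        = t * x p - ∑ a ∈ C.erase p, x a := by
      rw [Finset.sum_sub_distrib, Finset.sum_const, nsmul_eq_mul, ht]
    rw [hxa]
    push_cast
    ring
  -- bound the difference below
  have hj' : j ∈ C.erase p := Finset.mem_erase.mpr ⟨hjp, hjC⟩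
  have hsum : x p - x j ≤ ∑ a ∈ C.erase p, (x p - x a) := by
    apply Finset.single_le_sum (f := fun a => x p - x a) _ hj'
    intro a ha
    have := hpmax a (Finset.mem_of_mem_erase ha)
    linarith
  have htn : t ≤ (n : ℝ) := by
    rw [ht]
    have : (C.erase p).card ≤ n := by
      simpa using Finset.card_le_card (Finset.subset_univ (C.erase p))
    exact_mod_cast this
  have ht0 : 0 ≤ t := by exact Nat.cast_nonneg _
  have hpen : α * (t ^ 2 + t) ≤ α * ((n:ℝ)^2 + n) := by
    apply mul_le_mul_of_nonneg_left _ hα.le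
    nlinarith
  have hpos : 0 < obj x α s - obj x α r := by
    rw [key]
    have : x i - x j ≤ x p - x j := by linarith
    linarith
  linarith [hmax s hws]

lemma merge_aux {x : Fin n → ℝ} {α : ℝ} (h : IsWeakOrder r)
    (hmax : ∀ s : Fin n → Fin n → Prop, IsWeakOrder s → obj x α s ≤ obj x α r)
    (hα : 0 < α)
    (hmono : ∀ a b : Fin n, copeland r a ≤ copeland r b → x a ≤ x b)
    {i j : Fin n} (hxij : x i = x j) (hlt : copeland r j < copeland r i) : False := by
  classical
  set c : Fin n → ℤ := copeland r with hc
  set B : Finset (Fin n) :=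
    Finset.univ.filter (fun k => c j ≤ c k ∧ c k ≤ c i) with hB
  have hmemB : ∀ k, k ∈ B ↔ (c j ≤ c k ∧ c k ≤ c i) := by
    intro k; simp [hB]
  have hiB : i ∈ B := (hmemB i).mpr ⟨hlt.le, le_refl _⟩
  have hjB : j ∈ B := (hmemB j).mpr ⟨le_refl _, hlt.le⟩
  set s : Fin n → Fin n → Prop := fun a b => r a b ∨ (a ∈ B ∧ b ∈ B) with hs
  have hws : IsWeakOrder s := by
    constructor
    · intro a b
      rcases h.1 a b with hab | hba
      · exact Or.inl (Or.inl hab)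
      · exact Or.inr (Or.inl hba)
    · rintro a b c' (hab | ⟨haB, hbB⟩) (hbc | ⟨hbB', hcB⟩)
      · exact Or.inl (h.2 hab hbc)
      · by_cases haB : a ∈ B
        · exact Or.inr ⟨haB, hcB⟩
        · left
          rw [rep h]
          have h1 : c b ≤ c a := (rep h).mp hab
          have h2 := (hmemB b).mp hbB'
          have h3 := (hmemB c').mp hcB
          have h4 : ¬ (c j ≤ c a ∧ c a ≤ c i) := fun hh => haB ((hmemB a).mpr hh)
          have h5 : c j ≤ c a := le_trans h2.1 h1
          have h6 : ¬ (c a ≤ c i) := fun hh => h4 ⟨h5, hh⟩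
          push_neg at h6
          exact le_trans h3.2 h6.le
      · by_cases hcB : c' ∈ B
        · exact Or.inr ⟨haB, hcB⟩
        · left
          rw [rep h]
          have h1 : c c' ≤ c b := (rep h).mp hbc
          have h2 := (hmemB b).mp hbB
          have h3 := (hmemB a).mp haB
          have h4 : ¬ (c j ≤ c c' ∧ c c' ≤ c i) := fun hh => hcB ((hmemB c').mpr hh)
          have h6 : ¬ (c j ≤ c c') := fun hh => h4 ⟨hh, le_trans h1 h2.2⟩
          push_neg at h6
          exact le_trans h6.le h3.1
      · exact Or.inr ⟨haB, hcB⟩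
  -- copeland computations
  set d : ℤ := (({k | c k ≤ c i} : Set (Fin n)).ncard : ℤ)
      - (({k | c j ≤ c k} : Set (Fin n)).ncard : ℤ) with hd
  have cOut : ∀ a ∉ B, copeland s a = copeland r a := by
    intro a ha
    unfold copeland
    have hA : ({k | s a k} : Set (Fin n)).ncard = ({k | r a k} : Set (Fin n)).ncard := by
      apply setOf_ncard_congr
      intro k
      simp only [hs]
      constructor
      · rintro (hk | ⟨haB, _⟩)
        · exact hk
        · exact absurd haB ha
      · exact Or.inl
    have hBc : ({k | s k a} : Set (Fin n)).ncard = ({k | r k a} : Set (Fin n)).ncard := by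
      apply setOf_ncard_congr
      intro k
      simp only [hs]
      constructor
      · rintro (hk | ⟨_, haB⟩)
        · exact hk
        · exact absurd haB ha
      · exact Or.inl
    rw [hA, hBc]
  have cIn : ∀ b ∈ B, copeland s b = d := by
    intro b hb
    have hbB := (hmemB b).mp hb
    unfold copeland
    have hA : ({k | s b k} : Set (Fin n)).ncard = ({k | c k ≤ c i} : Set (Fin n)).ncard := by
      apply setOf_ncard_congr
      intro k
      simp only [hs]
      constructor
      · rintro (hk | ⟨_, hkB⟩)
        · exact le_trans ((rep h).mp hk) hbB.2
        · exact ((hmemB k).mp hkB).2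
      · intro hk
        by_cases hkj : c j ≤ c k
        · exact Or.inr ⟨hb, (hmemB k).mpr ⟨hkj, hk⟩⟩
        · push_neg at hkj
          exact Or.inl ((rep h).mpr (le_trans hkj.le hbB.1))
    have hBc : ({k | s k b} : Set (Fin n)).ncard = ({k | c j ≤ c k} : Set (Fin n)).ncard := by
      apply setOf_ncard_congr
      intro k
      simp only [hs]
      constructor
      · rintro (hk | ⟨hkB, _⟩)
        · exact le_trans hbB.1 ((rep h).mp hk)
        · exact ((hmemB k).mp hkB).1
      · intro hk
        by_cases hki : c k ≤ c i
        · exact Or.inr ⟨(hmemB k).mpr ⟨hk, hki⟩, hb⟩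
        · push_neg at hki
          exact Or.inl ((rep h).mpr (le_trans hbB.2 hki.le))
    rw [hA, hBc, hd]
  -- sum over B is preserved
  have hsumB : (B.card : ℤ) * d = ∑ k ∈ B, c k := by
    have hz1 := sum_copeland_zero s
    have hz2 := sum_copeland_zero r
    have hsplit1 : ∑ k, copeland s k
        = ∑ k ∈ B, copeland s k + ∑ k ∈ Finset.univ \ B, copeland s k := by
      rw [Finset.sum_sdiff_eq_sub (Finset.subset_univ B)]; ring
    have hsplit2 : ∑ k, copeland r k
        = ∑ k ∈ B, copeland r k + ∑ k ∈ Finset.univ \ B, copeland r k := by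
      rw [Finset.sum_sdiff_eq_sub (Finset.subset_univ B)]; ring
    have hout : ∑ k ∈ Finset.univ \ B, copeland s k
        = ∑ k ∈ Finset.univ \ B, copeland r k := by
      apply Finset.sum_congr rfl
      intro k hk
      exact cOut k (Finset.mem_sdiff.mp hk).2
    have hin : ∑ k ∈ B, copeland s k = (B.card : ℤ) * d := by
      rw [Finset.sum_congr rfl cIn, Finset.sum_const, nsmul_eq_mul]
    rw [hsplit1, hout, hin] at hz1
    rw [hsplit2] at hz2
    have : (B.card : ℤ) * d = ∑ k ∈ B, copeland r k := by linarith
    exact this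
  have hsumR : ∑ k ∈ B, (c k : ℝ) = (B.card : ℝ) * (d : ℝ) := by
    have h2 : ((∑ k ∈ B, c k : ℤ) : ℝ) = (((B.card : ℤ) * d : ℤ) : ℝ) :=
      congrArg (fun z : ℤ => (z : ℝ)) hsumB.symm
    push_cast at h2
    linarith
  -- x is constant on B
  have hxB : ∀ k ∈ B, x k = x i := by
    intro k hk
    have hkB := (hmemB k).mp hk
    have h1 : x k ≤ x i := hmono k i hkB.2
    have h2 : x j ≤ x k := hmono j k hkB.1
    linarith [hxij ▸ h2]
  -- objective difference
  have key : obj x α s - obj x α r = α * ∑ k ∈ B, ((c k : ℝ) - (d : ℝ)) ^ 2 := by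
    unfold obj
    rw [← Finset.sum_sub_distrib,
      ← Finset.sum_subset (Finset.subset_univ B) (fun k _ hk => by rw [cOut k hk]; ring)]
    have hterm : ∀ k ∈ B,
        (x k * (copeland s k : ℝ) - α * (copeland s k : ℝ) ^ 2)
          - (x k * (copeland r k : ℝ) - α * (copeland r k : ℝ) ^ 2)
        = (x i - 2 * α * (d:ℝ)) * ((d:ℝ) - (c k : ℝ)) + α * ((c k : ℝ) - (d:ℝ))^2 := by
      intro k hk
      rw [cIn k hk, hxB k hk]
      show x i * (d:ℝ) - α * (d:ℝ)^2 - (x i * ((c k : ℤ) : ℝ) - α * ((c k : ℤ):ℝ)^2) = _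
      ring
    have hz : ∑ k ∈ B, ((d:ℝ) - (c k : ℝ)) = 0 := by
      rw [Finset.sum_sub_distrib, Finset.sum_const, nsmul_eq_mul, hsumR]
      ring
    rw [Finset.sum_congr rfl hterm, Finset.sum_add_distrib, ← Finset.mul_sum,
      ← Finset.mul_sum, hz]
    ring
  -- strict positivity
  have hne : c i ≠ c j := ne_of_gt hlt
  have hex : ∃ k ∈ B, (0:ℝ) < ((c k : ℝ) - (d : ℝ)) ^ 2 := by
    by_cases hdi : c i = d
    · refine ⟨j, hjB, ?_⟩
      have : c j ≠ d := fun e => hne (hdi.trans e.symm)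
      have h9 : ((c j : ℝ)) ≠ (d : ℝ) := fun e => this (by exact_mod_cast e)
      exact sq_pos_of_ne_zero (sub_ne_zero.mpr h9)
    · refine ⟨i, hiB, ?_⟩
      have h9 : ((c i : ℝ)) ≠ (d : ℝ) := fun e => hdi (by exact_mod_cast e)
      exact sq_pos_of_ne_zero (sub_ne_zero.mpr h9)
  have hpos : 0 < obj x α s - obj x α r := by
    rw [key]
    apply mul_pos hα
    obtain ⟨k0, hk0, hk0'⟩ := hex
    exact Finset.sum_pos' (fun k _ => sq_nonneg _) ⟨k0, hk0, hk0'⟩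
  linarith [hmax s hws]

end Aux

/-- SCM for optimization via generalized row sums: if `x` is the vector of
generalized row sums (with `ε` positive and reasonable), then for all small
enough `α > 0`, every weak order maximizing `∑ i (xᵢ ρ(i) - α ρ(i)²)` over weak
orders ranks the alternatives exactly as `x` does: `xᵢ > xⱼ` implies
`ρ(i) > ρ(j)` and `xᵢ = xⱼ` implies `ρ(i) = ρ(j)`. -/
theorem stmt19 (n m : ℕ) (hn : 2 < n) (hm : 1 ≤ m) (rmax : ℝ) (hrmax : 0 < rmax)
    (P : Profile (-rmax) rmax n m)
    (hskew : ∀ p i j, P.defined p i j → P.val p j i = -P.val p i j)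
    (ε : ℝ) (hε : 0 < ε) (hreas : ε ≤ 1 / ((m : ℝ) * ((n : ℝ) - 2)))
    (x : Fin n → ℝ)
    (hx : ∀ i, x i = ∑ k, ∑ p, if P.defined p i k then
      P.val p i k + ε * (x k - x i + P.val p i k * (m : ℝ) * (n : ℝ)) else 0) :
    ∃ α₀ > (0 : ℝ), ∀ α : ℝ, 0 < α → α < α₀ →
      ∀ r : Fin n → Fin n → Prop, IsWeakOrder r →
        (∀ s : Fin n → Fin n → Prop, IsWeakOrder s →
          ∑ i, (x i * (copeland s i : ℝ) - α * (copeland s i : ℝ) ^ 2) ≤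
            ∑ i, (x i * (copeland r i : ℝ) - α * (copeland r i : ℝ) ^ 2)) →
        (∀ i j, x i > x j → copeland r i > copeland r j) ∧
        (∀ i j, x i = x j → copeland r i = copeland r j) := by
  classical
  set G : Finset ℝ := (Finset.univ ×ˢ Finset.univ).image (fun p : Fin n × Fin n => x p.1 - x p.2)
    |>.filter (fun g => 0 < g) with hG
  have hGpos : ∀ g ∈ G, 0 < g := fun g hg => (Finset.mem_filter.mp hg).2
  set α₀ : ℝ := if hne : G.Nonempty then G.min' hne / ((n:ℝ)^2 + n + 1) else 1 with hα₀
  have hden : (0:ℝ) < (n:ℝ)^2 + n + 1 := by positivity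
  have hα₀pos : 0 < α₀ := by
    rw [hα₀]
    split_ifs with hne
    · exact div_pos (hGpos _ (G.min'_mem hne)) hden
    · exact one_pos
  refine ⟨α₀, hα₀pos, ?_⟩
  intro α hα hαlt r hr hmax
  have hsmall : ∀ i j : Fin n, x j < x i → α * ((n:ℝ)^2 + n) < x i - x j := by
    intro i j hij
    have hmemg : (x i - x j) ∈ G := by
      rw [hG]
      refine Finset.mem_filter.mpr ⟨?_, by linarith⟩
      exact Finset.mem_image.mpr ⟨(i, j), by simp, rfl⟩
    have hGne : G.Nonempty := ⟨_, hmemg⟩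
    have hmin : G.min' hGne ≤ x i - x j := Finset.min'_le _ _ hmemg
    have hα₀' : α₀ = G.min' hGne / ((n:ℝ)^2 + n + 1) := by rw [hα₀, dif_pos hGne]
    have h1 : α * ((n:ℝ)^2 + n) < α₀ * ((n:ℝ)^2 + n + 1) := by
      have hnn : (0:ℝ) ≤ (n:ℝ)^2 + n := by positivity
      nlinarith
    have h2 : α₀ * ((n:ℝ)^2 + n + 1) = G.min' hGne := by
      rw [hα₀']; field_simp
    linarith [h1, h2 ▸ h1]
  have part1 : ∀ i j : Fin n, x i > x j → copeland r i > copeland r j := by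
    intro i j hij
    have hle : copeland r j ≤ copeland r i := mono_of_max hr hmax hij
    rcases lt_or_eq_of_le hle with hlt | heq
    · exact hlt
    · exfalso
      have hrij : r i j := (rep hr).mpr heq.le
      have hrji : r j i := (rep hr).mpr heq.ge
      exact no_mixed_tie hr hmax hα (hsmall i j hij) hij hrij hrji
  refine ⟨part1, ?_⟩
  have hmono : ∀ a b : Fin n, copeland r a ≤ copeland r b → x a ≤ x b := by
    intro a b hab
    by_contra hba
    push_neg at hba
    exact absurd hab (not_le.mpr (part1 a b hba))
  intro i j hxeq
  rcases lt_trichotomy (copeland r j) (copeland r i) with hlt | heq | hgt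
  · exact absurd (merge_aux hr hmax hα hmono hxeq hlt) (fun h => h)
  · exact heq.symm
  · exact absurd (merge_aux hr hmax hα hmono hxeq.symm hgt) (fun h => h)
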